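/- Let (X, ρ) be a separable metric space equipped with its Borel σ-algebra, ν a finite Borel measure on X, Y a countable label set, and c : X → Y a Borel-measurable concept whose boundary set is essentially countable (∂X = N ∪ Z with N countable and ν(Z) = 0). Let (X_t)_{t≥1} be an X-valued process driven by a ν-dominated adversary. Then almost surely, the mistake rate of the 1-nearest neighbor rule under worst-case tie-breaking converges to zero: (1/T) · #{ 2 ≤ t ≤ T : ∃ s < t with ρ(X_t, X_s) ≤ ρ(X_t, X_{s'}) for all s' < t and c(X_s) ≠ c(X_t) } → 0 as T → ∞. -/

import Mathlib

open scoped ENNReal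
open MeasureTheory Filter

/-- The margin of a point `x`: the infimum distance (in `[0,∞]`) to points of a
different class under the concept `c`; `∞` if no such point exists. -/
noncomputable def margin {X Y : Type*} [MetricSpace X] (c : X → Y) (x : X) : ℝ≥0∞ :=
  ⨅ (x' : X) (_ : c x' ≠ c x), edist x x'

/-- The 1-nearest neighbor rule makes a mistake at time `t ≥ 2` on the sequence
`(x s)_{s ≥ 1}` labeled by `c`, under worst-case tie-breaking, if some nearest
neighbor `x s` (`1 ≤ s < t`) of `x t` has the wrong label. -/
def NNMistake {X Y : Type*} [MetricSpace X] (c : X → Y) (x : ℕ → X) (t : ℕ) : Prop :=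
  ∃ s, 1 ≤ s ∧ s < t ∧ (∀ s', 1 ≤ s' → s' < t → edist (x t) (x s) ≤ edist (x t) (x s'))
    ∧ c (x s) ≠ c (x t)

/-!
Say a set `S` is a margin cell if any two distinct points of `S` are closer than the margin of
the first. By the nearest-neighbor property, a mistake at a point of a margin cell can happen
only on the first visit of the process to that cell. Separability and the essential
countability of the boundary give, for every `δ > 0`, finitely many margin cells (singletons of
points of `N`, and pieces of balls of radius `γ/2` consisting of points of margin `≥ γ`) covering
everything but a set `B` with `ν B < δ`. So the mistakes up to time `T` are at most the visits
to `B` plus the number of cells. Domination bounds the conditional probability of each visit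
to `B` by an arbitrary `ε`, and a strong law of large numbers for bounded martingale differences
(Chebyshev along the squares `k * k`, Borel–Cantelli, and interpolation) turns that into an
almost sure asymptotic visit frequency of at most `ε`.
-/

open Finset

lemma ae_tendsto_zero_of_forall_eventually_abs_le {Ω ι : Type*} {mΩ : MeasurableSpace Ω}
    {μ : Measure Ω} {l : Filter ι} {f : ι → Ω → ℝ}
    (h : ∀ ε > 0, ∀ᵐ ω ∂μ, ∀ᶠ i in l, |f i ω| ≤ ε) :
    ∀ᵐ ω ∂μ, Tendsto (fun i => f i ω) l (nhds 0) := by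
  filter_upwards [ae_all_iff.2 fun m : ℕ => h (1 / (m + 1)) Nat.one_div_pos_of_nat] with ω hω
  refine Metric.tendsto_nhds.2 fun ε hε => ?_
  obtain ⟨m, hm⟩ := exists_nat_one_div_lt hε
  filter_upwards [hω m] with i hi
  rw [Real.dist_0_eq_abs]
  exact hi.trans_lt hm

lemma integral_mul_eq_zero_of_condExp_eq_zero {Ω : Type*} {m mΩ : MeasurableSpace Ω}
    {P : Measure Ω} [IsFiniteMeasure P] (hm : m ≤ mΩ) {f g : Ω → ℝ}
    (hf : StronglyMeasurable[m] f) (hfg : Integrable (f * g) P) (hg : Integrable g P)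
    (hg0 : P[g | m] =ᵐ[P] 0) :
    ∫ ω, f ω * g ω ∂P = 0 := by
  calc ∫ ω, f ω * g ω ∂P = ∫ ω, P[f * g | m] ω ∂P := (integral_condExp hm).symm
    _ = ∫ ω, (f * 0 : Ω → ℝ) ω ∂P :=
      integral_congr_ae ((condExp_mul_of_stronglyMeasurable_left hf hfg hg).trans
        (EventuallyEq.rfl.mul hg0))
    _ = 0 := by simp

lemma ae_condExp_indicator_one_mem_Icc {Ω : Type*} {m mΩ : MeasurableSpace Ω} {P : Measure Ω}
    [IsFiniteMeasure P] (hm : m ≤ mΩ) {s : Set Ω} (hs : MeasurableSet s) :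
    ∀ᵐ ω ∂P, P[s.indicator (fun _ => (1 : ℝ)) | m] ω ∈ Set.Icc 0 1 := by
  have hle := condExp_mono (m := m) (μ := P) ((integrable_const (1 : ℝ)).indicator hs)
    (integrable_const (1 : ℝ)) (Eventually.of_forall fun ω =>
      Set.indicator_apply_le' (fun _ => le_rfl) fun _ => zero_le_one)
  rw [condExp_const hm] at hle
  filter_upwards [condExp_nonneg (m := m) (μ := P) (Eventually.of_forall
    (Set.indicator_nonneg fun _ _ => zero_le_one : 0 ≤ s.indicator fun _ => (1 : ℝ))), hle]
    with ω h0 h1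
  exact ⟨h0, h1⟩

lemma condExp_sub_condExp_ae_eq_zero {Ω : Type*} {m mΩ : MeasurableSpace Ω} {P : Measure Ω}
    [IsFiniteMeasure P] (hm : m ≤ mΩ) {f : Ω → ℝ} (hf : Integrable f P) :
    P[f - P[f | m] | m] =ᵐ[P] 0 := by
  refine (condExp_sub hf integrable_condExp _).trans ?_
  rw [condExp_of_stronglyMeasurable hm stronglyMeasurable_condExp integrable_condExp, sub_self]

lemma eventually_abs_sum_range_le_of_sq {d : ℕ → ℝ} {C η : ℝ} (hd : ∀ n, |d n| ≤ C) (hη : 0 < η)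
    (h : ∀ᶠ k in atTop, |∑ n ∈ range (k * k), d n| ≤ η * (k * k)) :
    ∀ᶠ T in atTop, |∑ n ∈ range T, d n| ≤ 2 * η * T := by
  have hC : 0 ≤ C := (abs_nonneg _).trans (hd 0)
  obtain ⟨K, hK⟩ := eventually_atTop.1 <|
    h.and ((tendsto_natCast_atTop_atTop.const_mul_atTop hη).eventually_ge_atTop (2 * C))
  refine eventually_atTop.2 ⟨K * K, fun T hT => ?_⟩
  set k := Nat.sqrt T
  obtain ⟨hsq, hkC⟩ := hK k (Nat.le_sqrt.2 hT)
  have hkT : k * k ≤ T := Nat.sqrt_le T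
  have hgap : ((T - k * k : ℕ) : ℝ) ≤ 2 * k := by
    have hlt : T < (k + 1) * (k + 1) := Nat.lt_succ_sqrt T
    exact_mod_cast Nat.sub_le_iff_le_add.2 (by nlinarith)
  have htail : |∑ n ∈ Ico (k * k) T, d n| ≤ η * (k * k) := calc
    |∑ n ∈ Ico (k * k) T, d n| ≤ ∑ n ∈ Ico (k * k) T, |d n| := abs_sum_le_sum_abs _ _
    _ ≤ (T - k * k : ℕ) * C :=
      (sum_le_card_nsmul _ _ _ fun n _ => hd n).trans_eq (by rw [Nat.card_Ico, nsmul_eq_mul])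
    _ ≤ 2 * k * C := by gcongr
    _ ≤ η * (k * k) := by nlinarith [hkC]
  have hkT' : (k : ℝ) * k ≤ T := by exact_mod_cast hkT
  calc |∑ n ∈ range T, d n| = |∑ n ∈ range (k * k), d n + ∑ n ∈ Ico (k * k) T, d n| := by
        rw [sum_range_add_sum_Ico _ hkT]
    _ ≤ η * (k * k) + η * (k * k) := (abs_add_le _ _).trans (by linarith)
    _ ≤ 2 * η * T := by nlinarith

lemma exists_finset_measure_compl_iUnion_lt {X ι : Type*} [Countable ι] [MeasurableSpace X]
    {ν : Measure X} [IsFiniteMeasure ν] {C : ι → Set X} (hC : ∀ i, MeasurableSet (C i))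
    {δ : ℝ≥0∞} (h : ν (⋃ i, C i)ᶜ < δ) : ∃ F : Finset ι, ν (⋃ i ∈ F, C i)ᶜ < δ := by
  classical
  have hlim := tendsto_measure_iInter_atTop (μ := ν) (s := fun F : Finset ι => (⋃ i ∈ F, C i)ᶜ)
    (fun F => (F.measurableSet_biUnion fun i _ => hC i).compl.nullMeasurableSet)
    (fun F G hFG => Set.compl_subset_compl.2 (Set.biUnion_subset_biUnion_left hFG))
    ⟨∅, measure_ne_top _ _⟩
  rw [← Set.compl_iUnion, ← Set.iUnion_eq_iUnion_finset] at hlim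
  exact (hlim.eventually (gt_mem_nhds h)).exists

section MartingaleDifference

variable {Ω : Type*} {mΩ : MeasurableSpace Ω} {P : Measure Ω} [IsProbabilityMeasure P]
  {ℱ : Filtration ℕ mΩ} {D : ℕ → Ω → ℝ} {C : ℝ}

lemma integral_sq_sum_range_le (hD : ∀ n, StronglyMeasurable[ℱ (n + 1)] (D n))
    (hDC : ∀ n, ∀ᵐ ω ∂P, |D n ω| ≤ C) (hD0 : ∀ n, P[D n | ℱ n] =ᵐ[P] 0) (T : ℕ) :
    ∫ ω, (∑ n ∈ range T, D n ω) ^ 2 ∂P ≤ T * C ^ 2 := by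
  induction T with
  | zero => simp
  | succ T ih =>
    set S : Ω → ℝ := fun ω => ∑ n ∈ range T, D n ω
    have hL2 : ∀ n, MemLp (D n) 2 P := fun n =>
      MemLp.of_bound ((hD n).mono (ℱ.le _)).aestronglyMeasurable C (hDC n)
    have hS : MemLp S 2 P := memLp_finsetSum _ fun n _ => hL2 n
    have hSD : Integrable (fun ω => S ω * D T ω) P := hS.integrable_mul (hL2 T)
    have hcross : ∫ ω, S ω * D T ω ∂P = 0 :=
      integral_mul_eq_zero_of_condExp_eq_zero (ℱ.le T)
        (stronglyMeasurable_fun_sum _ fun n hn => (hD n).mono (ℱ.mono (mem_range.1 hn)))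
        hSD ((hL2 T).integrable one_le_two) (hD0 T)
    have hDsq : ∫ ω, D T ω ^ 2 ∂P ≤ C ^ 2 := by
      refine (integral_mono_ae (hL2 T).integrable_sq (integrable_const (C ^ 2)) ?_).trans (by simp)
      filter_upwards [hDC T] with ω hω
      exact sq_le_sq' (abs_le.1 hω).1 (abs_le.1 hω).2
    calc ∫ ω, (∑ n ∈ range (T + 1), D n ω) ^ 2 ∂P
        = ∫ ω, (S ω ^ 2 + 2 * (S ω * D T ω) + D T ω ^ 2) ∂P := by
          simp only [sum_range_succ, S]; ring_nf
      _ = ∫ ω, S ω ^ 2 ∂P + 2 * ∫ ω, S ω * D T ω ∂P + ∫ ω, D T ω ^ 2 ∂P := by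
          rw [integral_add (f := fun ω => S ω ^ 2 + 2 * (S ω * D T ω))
            (hS.integrable_sq.add (hSD.const_mul 2)) (hL2 T).integrable_sq,
            integral_add hS.integrable_sq (hSD.const_mul 2), integral_const_mul]
      _ ≤ T * C ^ 2 + 2 * 0 + C ^ 2 := by rw [hcross]; gcongr
      _ = (T + 1 : ℕ) * C ^ 2 := by push_cast; ring

lemma ae_eventually_abs_sum_range_sq_le (hD : ∀ n, StronglyMeasurable[ℱ (n + 1)] (D n))
    (hDC : ∀ n, ∀ᵐ ω ∂P, |D n ω| ≤ C) (hD0 : ∀ n, P[D n | ℱ n] =ᵐ[P] 0) {η : ℝ} (hη : 0 < η) :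
    ∀ᵐ ω ∂P, ∀ᶠ k in atTop, |∑ n ∈ range (k * k), D n ω| ≤ η * (k * k) := by
  set s : ℕ → Set Ω := fun k => {ω | η * (k * k) < |∑ n ∈ range (k * k), D n ω|}
  have hs : ∀ k : ℕ, P (s k) ≤ ENNReal.ofReal (C ^ 2 / η ^ 2 * (1 / (k : ℝ) ^ 2)) := by
    intro k
    rcases k.eq_zero_or_pos with rfl | hk
    · simp [s]
    have hk' : (0 : ℝ) < k := by exact_mod_cast hk
    set M : Ω → ℝ := fun ω => ∑ n ∈ range (k * k), D n ω
    have hL2 : ∀ n, MemLp (D n) 2 P := fun n =>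
      MemLp.of_bound ((hD n).mono (ℱ.le _)).aestronglyMeasurable C (hDC n)
    have hM : Integrable (fun ω => M ω ^ 2) P :=
      (memLp_finsetSum _ fun n _ => hL2 n).integrable_sq
    have hmarkov := mul_meas_ge_le_integral_of_nonneg
      (Eventually.of_forall fun ω => sq_nonneg (M ω) : 0 ≤ᵐ[P] fun ω => M ω ^ 2) hM
      ((η * (k * k)) ^ 2)
    have hsub : s k ⊆ {ω | (η * (k * k)) ^ 2 ≤ M ω ^ 2} := fun ω hω =>
      sq_le_sq.2 ((abs_of_pos (by positivity : (0 : ℝ) < η * (k * k))).trans_le hω.le)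
    have hreal : P.real {ω | (η * (k * k)) ^ 2 ≤ M ω ^ 2} ≤ C ^ 2 / η ^ 2 * (1 / (k : ℝ) ^ 2) := by
      refine le_of_mul_le_mul_right ?_ (by positivity : (0 : ℝ) < (η * (k * k)) ^ 2)
      calc _ ≤ ∫ ω, M ω ^ 2 ∂P := by linarith
        _ ≤ (k * k : ℕ) * C ^ 2 := integral_sq_sum_range_le hD hDC hD0 _
        _ = _ := by push_cast; field_simp
    calc P (s k) ≤ P {ω | (η * (k * k)) ^ 2 ≤ M ω ^ 2} := measure_mono hsub
      _ = ENNReal.ofReal (P.real {ω | (η * (k * k)) ^ 2 ≤ M ω ^ 2}) := (ofReal_measureReal).symm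
      _ ≤ _ := ENNReal.ofReal_le_ofReal hreal
  have hsummable : Summable fun k : ℕ => C ^ 2 / η ^ 2 * (1 / (k : ℝ) ^ 2) :=
    (Real.summable_one_div_nat_pow.2 one_lt_two).mul_left _
  have hsum : ∑' k, P (s k) ≠ ⊤ := by
    refine ne_top_of_le_ne_top ?_ (ENNReal.tsum_le_tsum hs)
    rw [← ENNReal.ofReal_tsum_of_nonneg (fun k => by positivity) hsummable]
    exact ENNReal.ofReal_ne_top
  filter_upwards [ae_eventually_notMem hsum] with ω hω
  exact hω.mono fun k hk => not_lt.1 hk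

theorem ae_tendsto_sum_range_div_of_condExp_eq_zero
    (hD : ∀ n, StronglyMeasurable[ℱ (n + 1)] (D n))
    (hDC : ∀ n, ∀ᵐ ω ∂P, |D n ω| ≤ C) (hD0 : ∀ n, P[D n | ℱ n] =ᵐ[P] 0) :
    ∀ᵐ ω ∂P, Tendsto (fun T : ℕ => (∑ n ∈ range T, D n ω) / T) atTop (nhds 0) := by
  refine ae_tendsto_zero_of_forall_eventually_abs_le fun ε hε => ?_
  filter_upwards [ae_all_iff.2 hDC, ae_eventually_abs_sum_range_sq_le hD hDC hD0 (half_pos hε)]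
    with ω hω hsq
  filter_upwards [eventually_abs_sum_range_le_of_sq hω (half_pos hε) hsq] with T hT
  rw [abs_div, Nat.abs_cast]
  exact div_le_of_le_mul₀ T.cast_nonneg hε.le (by linarith)

theorem ae_eventually_sum_indicator_le_mul_of_condExp_le {E : ℕ → Set Ω}
    (hE : ∀ n, MeasurableSet[ℱ (n + 1)] (E n)) {ε ε' : ℝ} (hεε' : ε < ε')
    (hp : ∀ n, P[(E n).indicator (fun _ => (1 : ℝ)) | ℱ n] ≤ᵐ[P] fun _ => ε) :
    ∀ᵐ ω ∂P, ∀ᶠ T in atTop, ∑ n ∈ range T, (E n).indicator (fun _ => (1 : ℝ)) ω ≤ ε' * T := by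
  set I : ℕ → Ω → ℝ := fun n => (E n).indicator fun _ => 1
  set g : ℕ → Ω → ℝ := fun n => P[I n | ℱ n]
  have hIint : ∀ n, Integrable (I n) P := fun n =>
    (integrable_const 1).indicator (ℱ.le _ _ (hE n))
  have hD : ∀ n, StronglyMeasurable[ℱ (n + 1)] (I n - g n) := fun n =>
    (stronglyMeasurable_const.indicator (hE n)).sub
      (stronglyMeasurable_condExp.mono (ℱ.mono n.le_succ))
  have hDC : ∀ n, ∀ᵐ ω ∂P, |(I n - g n) ω| ≤ 1 := fun n => by
    filter_upwards [ae_condExp_indicator_one_mem_Icc (ℱ.le n) (ℱ.le _ _ (hE n))] with ω hω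
    exact abs_sub_le_of_nonneg_of_le (Set.indicator_nonneg (fun _ _ => zero_le_one) ω)
      (Set.indicator_apply_le' (fun _ => le_rfl) fun _ => zero_le_one) hω.1 hω.2
  have hD0 : ∀ n, P[I n - g n | ℱ n] =ᵐ[P] 0 := fun n =>
    condExp_sub_condExp_ae_eq_zero (ℱ.le n) (hIint n)
  filter_upwards [ae_tendsto_sum_range_div_of_condExp_eq_zero hD hDC hD0, ae_all_iff.2 hp]
    with ω hlim hg
  filter_upwards [hlim.eventually (gt_mem_nhds (sub_pos.2 hεε')), eventually_gt_atTop 0]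
    with T hT hT0
  have hDT := (div_lt_iff₀ (by exact_mod_cast hT0 : (0 : ℝ) < T)).1 hT
  have hgT : ∑ n ∈ range T, g n ω ≤ ε * T :=
    (sum_le_card_nsmul _ _ _ fun n _ => hg n).trans_eq (by rw [card_range, nsmul_eq_mul, mul_comm])
  calc ∑ n ∈ range T, I n ω = ∑ n ∈ range T, (I n - g n) ω + ∑ n ∈ range T, g n ω := by
        rw [← sum_add_distrib]; simp
    _ ≤ ε' * T := by linarith

end MartingaleDifference

section Margin

variable {X Y : Type*} [MetricSpace X] {c : X → Y}

lemma margin_le_edist {x x' : X} (h : c x' ≠ c x) : margin c x ≤ edist x x' :=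
  iInf₂_le x' h

lemma measurable_margin [MeasurableSpace X] [BorelSpace X] [Countable Y] [MeasurableSpace Y]
    [MeasurableSingletonClass Y] (hc : Measurable c) : Measurable (margin c) := by
  -- `margin c x` is definitionally `Metric.infEDist x {x' | c x' ≠ c x}`
  have hF : Measurable fun p : X × Y => Metric.infEDist p.1 {x' | c x' ≠ p.2} :=
    measurable_from_prod_countable_left fun y =>
      (Metric.continuous_infEDist (s := {x' | c x' ≠ y})).measurable
  exact hF.comp (measurable_id.prodMk hc)

def IsMarginCell (c : X → Y) (S : Set X) : Prop :=
  ∀ x ∈ S, ∀ y ∈ S, x ≠ y → edist x y < margin c x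

lemma isMarginCell_singleton (z : X) : IsMarginCell c {z} := by
  rintro x rfl y rfl h
  exact (h rfl).elim

lemma isMarginCell_ball_inter {γ : ℝ≥0∞} (d : X) :
    IsMarginCell c (Metric.eball d (γ / 2) ∩ {x | γ ≤ margin c x}) := by
  rintro x ⟨hx, hγx⟩ y ⟨hy, -⟩ -
  calc edist x y ≤ edist x d + edist d y := edist_triangle _ _ _
    _ < γ / 2 + γ / 2 := ENNReal.add_lt_add hx (edist_comm d y ▸ hy)
    _ = γ := ENNReal.add_halves γ
    _ ≤ margin c x := hγx

lemma NNMistake.notMem_of_isMarginCell {x : ℕ → X} {t : ℕ} {S : Set X} (h : NNMistake c x t)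
    (hS : IsMarginCell c S) (ht : x t ∈ S) {s : ℕ} (hs : 1 ≤ s) (hst : s < t) : x s ∉ S := by
  intro hsS
  obtain ⟨s₀, -, -, hnear, hne⟩ := h
  have hs₀ := hnear s hs hst
  by_cases hts : x t = x s
  · rw [hts, edist_self, nonpos_iff_eq_zero, edist_eq_zero] at hs₀
    exact hne (by rw [hts, hs₀])
  · exact (hS _ ht _ hsS hts).not_ge ((margin_le_edist hne).trans hs₀)

lemma exists_pos_measure_margin_lt_diff_lt [MeasurableSpace X] [BorelSpace X] [Countable Y]
    [MeasurableSpace Y] [MeasurableSingletonClass Y] {ν : Measure X} [IsFiniteMeasure ν]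
    (hc : Measurable c) {N : Set X} (hN : MeasurableSet N)
    (h0 : ν ({x | margin c x = 0} \ N) = 0) {δ : ℝ≥0∞} (hδ : 0 < δ) :
    ∃ γ > 0, ν ({x | margin c x < γ} \ N) < δ := by
  have hlim := tendsto_measure_biInter_gt (μ := ν) (a := 0)
    (s := fun γ => {x | margin c x < γ} \ N)
    (fun γ _ =>
      ((measurableSet_lt (measurable_margin hc) measurable_const).diff hN).nullMeasurableSet)
    (fun γ γ' _ hγ => Set.sdiff_subset_sdiff_left fun x (hx : margin c x < γ) => hx.trans_le hγ)
    ⟨1, one_pos, measure_ne_top _ _⟩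
  have hinter : ⋂ γ > (0 : ℝ≥0∞), ({x | margin c x < γ} \ N) = {x | margin c x = 0} \ N := by
    ext x
    simp only [Set.mem_iInter, Set.mem_sdiff, Set.mem_ofPred_eq]
    refine ⟨fun h => ⟨nonpos_iff_eq_zero.1 (le_of_forall_gt fun γ hγ => (h γ hγ).1),
      (h 1 one_pos).2⟩, fun h γ hγ => ⟨h.1 ▸ hγ, h.2⟩⟩
  rw [hinter, h0] at hlim
  exact ((hlim.eventually (gt_mem_nhds hδ)).and self_mem_nhdsWithin).exists.imp
    fun γ h => ⟨h.2, h.1⟩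

lemma exists_finset_isMarginCell [TopologicalSpace.SeparableSpace X] [MeasurableSpace X]
    [BorelSpace X] [Countable Y] [MeasurableSpace Y] [MeasurableSingletonClass Y]
    {ν : Measure X} [IsFiniteMeasure ν] (hc : Measurable c) {N : Set X} (hN : N.Countable)
    (h0 : ν ({x | margin c x = 0} \ N) = 0) {δ : ℝ≥0∞} (hδ : 0 < δ) :
    ∃ 𝒮 : Finset (Set X), (∀ S ∈ 𝒮, MeasurableSet S ∧ IsMarginCell c S) ∧ ν (⋃₀ ↑𝒮)ᶜ < δ := by
  obtain ⟨γ, hγ, hνγ⟩ := exists_pos_measure_margin_lt_diff_lt hc hN.measurableSet h0 hδ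
  obtain ⟨D, hD, hDdense⟩ := TopologicalSpace.exists_countable_dense X
  have := hN.to_subtype
  have := hD.to_subtype
  let cell : N ⊕ D → Set X :=
    Sum.elim (fun z => {z.1}) fun d => Metric.eball d.1 (γ / 2) ∩ {x | γ ≤ margin c x}
  have hcell : ∀ i, MeasurableSet (cell i) ∧ IsMarginCell c (cell i) := by
    rintro (z | d)
    · exact ⟨measurableSet_singleton _, isMarginCell_singleton _⟩
    · exact ⟨Metric.isOpen_eball.measurableSet.inter
        (measurableSet_le measurable_const (measurable_margin hc)), isMarginCell_ball_inter _⟩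
  have hcover : (⋃ i, cell i)ᶜ ⊆ {x | margin c x < γ} \ N := by
    intro x hx
    simp only [Set.mem_compl_iff, Set.mem_iUnion, not_exists] at hx
    refine ⟨show margin c x < γ from lt_of_not_ge fun hγx => ?_, fun hxN => hx (.inl ⟨x, hxN⟩) rfl⟩
    obtain ⟨d, hd, hxd⟩ :=
      EMetric.mem_closure_iff.1 (hDdense x) (γ / 2) (ENNReal.half_pos hγ.ne')
    exact hx (.inr ⟨d, hd⟩) ⟨hxd, hγx⟩
  obtain ⟨F, hF⟩ := exists_finset_measure_compl_iUnion_lt (fun i => (hcell i).1)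
    ((measure_mono hcover).trans_lt hνγ)
  classical
  refine ⟨F.image cell, fun S hS => ?_, ?_⟩
  · obtain ⟨i, -, rfl⟩ := mem_image.1 hS
    exact hcell i
  rwa [coe_image, Set.sUnion_image]

lemma card_le_of_forall_firstVisit {X : Type*} {𝒮 : Finset (Set X)} {x : ℕ → X} {τ : Finset ℕ}
    (hτ : ∀ t ∈ τ, 1 ≤ t ∧ ∃ S ∈ 𝒮, x t ∈ S ∧ ∀ s, 1 ≤ s → s < t → x s ∉ S) : #τ ≤ #𝒮 := by
  choose! hpos f hf using hτ
  refine card_le_card_of_injOn f (fun t ht => (hf t ht).1) fun t ht t' ht' he => ?_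
  by_contra hne
  wlog hlt : t < t' generalizing t t'
  · exact this t' ht' t ht he.symm (Ne.symm hne) (by omega)
  exact (hf t' ht').2.2 t (hpos t ht) hlt (he ▸ (hf t ht).2.1)

lemma ncard_nnMistake_le {𝒮 : Finset (Set X)} (h𝒮 : ∀ S ∈ 𝒮, IsMarginCell c S) (x : ℕ → X)
    (T : ℕ) :
    ({t | 2 ≤ t ∧ t ≤ T ∧ NNMistake c x t}.ncard : ℝ) ≤
      ∑ n ∈ range T, (⋃₀ (𝒮 : Set (Set X)))ᶜ.indicator (fun _ => (1 : ℝ)) (x (n + 1)) + #𝒮 := by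
  classical
  set B := (⋃₀ (𝒮 : Set (Set X)))ᶜ
  set M := {t ∈ Icc 2 T | NNMistake c x t}
  have hM : {t | 2 ≤ t ∧ t ≤ T ∧ NNMistake c x t} = ↑M := by ext; simp [M, and_assoc]
  have hB : #{t ∈ M | x t ∈ B} ≤ #{n ∈ range T | x (n + 1) ∈ B} := by
    refine card_le_card_of_injOn (· - 1) (fun t ht => ?_) fun t ht t' ht' he => ?_
    · simp only [M, coe_filter, mem_filter, mem_Icc, Set.mem_ofPred_eq] at ht
      simp only [coe_filter, mem_range, Set.mem_ofPred_eq]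
      exact ⟨by omega, by rw [Nat.sub_add_cancel (by omega)]; exact ht.2⟩
    · simp only [M, coe_filter, mem_filter, mem_Icc, Set.mem_ofPred_eq] at ht ht'
      simp only at he
      omega
  have hnotB : #{t ∈ M | x t ∉ B} ≤ #𝒮 := by
    refine card_le_of_forall_firstVisit (x := x) fun t ht => ?_
    simp only [M, mem_filter, mem_Icc, B, Set.mem_compl_iff, not_not, Set.mem_sUnion] at ht
    obtain ⟨⟨⟨h2, -⟩, hmis⟩, S, hS, hxS⟩ := ht
    exact ⟨by omega, S, hS, hxS, fun s hs hst => hmis.notMem_of_isMarginCell (h𝒮 S hS) hxS hs hst⟩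
  have hsum : ∑ n ∈ range T, B.indicator (fun _ => (1 : ℝ)) (x (n + 1)) =
      #{n ∈ range T | x (n + 1) ∈ B} := by
    simp only [Set.indicator_apply]
    rw [sum_boole]
  rw [hM, Set.ncard_coe_finset, ← card_filter_add_card_filter_not (fun t => x t ∈ B), hsum]
  push_cast
  exact add_le_add (by exact_mod_cast hB) (by exact_mod_cast hnotB)

end Margin

theorem nearestNeighbor_mistake_rate_to_zero_general
    {X Y Ω : Type*} [MetricSpace X] [TopologicalSpace.SeparableSpace X]
    [MeasurableSpace X] [BorelSpace X]
    [Countable Y] [MeasurableSpace Y] [MeasurableSingletonClass Y]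
    {mΩ : MeasurableSpace Ω} (P : Measure Ω) [IsProbabilityMeasure P]
    (ℱ : Filtration ℕ mΩ)
    (ν : Measure X) [IsFiniteMeasure ν]
    (c : X → Y) (hc : Measurable c)
    -- the boundary set is essentially countable
    (N Z : Set X) (hbd : {x : X | margin c x = 0} = N ∪ Z)
    (hN : N.Countable) (hZ : ν Z = 0)
    -- the adapted process of instances
    (Xp : ℕ → Ω → X) (hadapt : ∀ t, 1 ≤ t → Measurable[ℱ t] (Xp t))
    -- the adversary: `μa t ω` is the conditional law of `Xp t` given `ℱ (t-1)`
    (μa : ℕ → Ω → Measure X)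
    (hcond : ∀ t, 1 ≤ t → ∀ A : Set X, MeasurableSet A →
      (fun ω => (μa t ω A).toReal) =ᵐ[P]
        MeasureTheory.condExp (ℱ (t - 1)) P
          ((Xp t ⁻¹' A).indicator fun _ => (1 : ℝ)))
    -- the adversary is `ν`-dominated
    (hdom : ∀ ε : ℝ≥0∞, 0 < ε → ∃ δ : ℝ≥0∞, 0 < δ ∧
      ∀ A : Set X, MeasurableSet A → ν A < δ → ∀ t, 1 ≤ t →
        ∀ᵐ ω ∂P, μa t ω A < ε) :
    ∀ᵐ ω ∂P, Tendsto
      (fun T : ℕ =>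
        (({t : ℕ | 2 ≤ t ∧ t ≤ T ∧ NNMistake c (fun s => Xp s ω) t}).ncard : ℝ) / T)
      atTop (nhds 0) := by
  refine ae_tendsto_zero_of_forall_eventually_abs_le fun ε hε => ?_
  obtain ⟨δ, hδ, hνδ⟩ := hdom (ENNReal.ofReal (ε / 4)) (by positivity)
  have h0 : ν ({x | margin c x = 0} \ N) = 0 := by
    rw [hbd, Set.union_sdiff_left]
    exact measure_mono_null Set.sdiff_subset hZ
  obtain ⟨𝒮, h𝒮, h𝒮ν⟩ := exists_finset_isMarginCell hc hN h0 hδ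
  set B := (⋃₀ (𝒮 : Set (Set X)))ᶜ
  have hB : MeasurableSet B :=
    (MeasurableSet.sUnion 𝒮.countable_toSet fun S hS => (h𝒮 S hS).1).compl
  have hcondB : ∀ n, P[(Xp (n + 1) ⁻¹' B).indicator (fun _ => (1 : ℝ)) | ℱ n]
      ≤ᵐ[P] fun _ => ε / 4 := fun n => by
    filter_upwards [hcond (n + 1) n.succ_pos B hB, hνδ B hB h𝒮ν (n + 1) n.succ_pos]
      with ω hω hlt
    exact hω ▸ ENNReal.toReal_le_of_le_ofReal (by positivity) hlt.le
  filter_upwards [ae_eventually_sum_indicator_le_mul_of_condExp_le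
    (fun n => hadapt (n + 1) n.succ_pos hB) (by linarith : ε / 4 < ε / 2) hcondB] with ω hω
  have hcells := (tendsto_natCast_atTop_atTop.const_mul_atTop (half_pos hε)).eventually_ge_atTop
    (#𝒮 : ℝ)
  filter_upwards [hω, hcells] with T hvisits hcells
  rw [abs_of_nonneg (by positivity)]
  refine div_le_of_le_mul₀ T.cast_nonneg hε.le ?_
  calc _ ≤ _ := ncard_nnMistake_le (fun S hS => (h𝒮 S hS).2) (fun s => Xp s ω) T
    _ ≤ ε / 2 * T + ε / 2 * T := add_le_add hvisits hcells
    _ = ε * T := by ring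

/-- Against a `ν`-dominated adversary, if the boundary set of the Borel concept `c` is
essentially countable, the mistake rate of the 1-nearest neighbor rule (under
worst-case tie-breaking) converges to zero almost surely. -/
theorem nearestNeighbor_mistake_rate_to_zero
    {X Y Ω : Type*} [MetricSpace X] [TopologicalSpace.SeparableSpace X]
    [MeasurableSpace X] [BorelSpace X]
    [Countable Y] [MeasurableSpace Y] [MeasurableSingletonClass Y]
    {mΩ : MeasurableSpace Ω} (P : Measure Ω) [IsProbabilityMeasure P]
    (ℱ : Filtration ℕ mΩ)
    (ν : Measure X) [IsFiniteMeasure ν]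
    (c : X → Y) (hc : Measurable c)
    -- the boundary set is essentially countable
    (N Z : Set X) (hbd : {x : X | margin c x = 0} = N ∪ Z)
    (hN : N.Countable) (hZ : ν Z = 0)
    -- the adapted process of instances
    (Xp : ℕ → Ω → X) (hadapt : ∀ t, 1 ≤ t → Measurable[ℱ t] (Xp t))
    -- the adversary: `μa t ω` is the conditional law of `Xp t` given `ℱ (t-1)`
    (μa : ℕ → Ω → Measure X) (hprob : ∀ t ω, IsProbabilityMeasure (μa t ω))
    (hmeas : ∀ t, 1 ≤ t → ∀ A : Set X, MeasurableSet A →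
      Measurable[ℱ (t - 1)] fun ω => μa t ω A)
    (hcond : ∀ t, 1 ≤ t → ∀ A : Set X, MeasurableSet A →
      (fun ω => (μa t ω A).toReal) =ᵐ[P]
        MeasureTheory.condExp (ℱ (t - 1)) P
          ((Xp t ⁻¹' A).indicator fun _ => (1 : ℝ)))
    -- the adversary is `ν`-dominated
    (hdom : ∀ ε : ℝ≥0∞, 0 < ε → ∃ δ : ℝ≥0∞, 0 < δ ∧
      ∀ A : Set X, MeasurableSet A → ν A < δ → ∀ t, 1 ≤ t →
        ∀ᵐ ω ∂P, μa t ω A < ε) :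
    ∀ᵐ ω ∂P, Tendsto
      (fun T : ℕ =>
        (({t : ℕ | 2 ≤ t ∧ t ≤ T ∧ NNMistake c (fun s => Xp s ω) t}).ncard : ℝ) / T)
      atTop (nhds 0) :=
  nearestNeighbor_mistake_rate_to_zero_general P ℱ ν c hc N Z hbd hN hZ Xp hadapt μa hcond hdom
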